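/- arXiv:1906.05783 — 2 statements merged into one kernel-verified Lean document; each statement's English description precedes it below -/
import Mathlib

section
/- Let $m$ be a positive integer with prime factorization $m = \prod_{j=1}^{w} p_j^{l_j}$, let $\Omega(m) = \sum_j l_j$, and let $k \geq 1$. Then each multiset of $k$ factors, each of which is either a prime or the square of a prime, with product $m$ gives rise to at most $(k!)\, 4^{\Omega(m)-k}$ ordered $k$-tuples (ordered products of $k$ such factors equal to $m$). -/
open Finset

/-- Each multiset of `k` elements, each a prime or the square of a prime, with product `m`,
gives rise to at most `k! · 4^(Ω(m) - k)` ordered `k`-tuples, where `Ω(m)` is the number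
of prime factors of `m` counted with multiplicity. -/
theorem multiset_ordered_tuples_bound (m k : ℕ) (hm : 0 < m) (hk : 1 ≤ k)
    (M : Multiset ℕ) (hcard : Multiset.card M = k)
    (helts : ∀ q ∈ M, ∃ p : ℕ, p.Prime ∧ (q = p ∨ q = p ^ 2))
    (hprod : M.prod = m) :
    Nat.card {q : Fin k → ℕ // ((List.ofFn q : List ℕ) : Multiset ℕ) = M} ≤
      Nat.factorial k * 4 ^ (m.primeFactorsList.length - k) := by
  have hML : (↑M.toList : Multiset ℕ) = M := M.coe_toList
  have h1 : Nat.card {q : Fin k → ℕ // ((List.ofFn q : List ℕ) : Multiset ℕ) = M} ≤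
      Nat.factorial k := by
    set L := M.toList with hL
    let f : {q : Fin k → ℕ // ((List.ofFn q : List ℕ) : Multiset ℕ) = M} →
        ↥(L.permutations.toFinset) := fun x =>
      ⟨List.ofFn x.1, by
        rw [List.mem_toFinset, List.mem_permutations]
        exact Multiset.coe_eq_coe.mp (x.2.trans hML.symm)⟩
    have hf : Function.Injective f := by
      rintro ⟨q, hq⟩ ⟨q', hq'⟩ h
      have h' : List.ofFn q = List.ofFn q' := congrArg Subtype.val h
      exact Subtype.ext (List.ofFn_injective h')
    calc Nat.card {q : Fin k → ℕ // ((List.ofFn q : List ℕ) : Multiset ℕ) = M}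
        ≤ Nat.card ↥(L.permutations.toFinset) := Nat.card_le_card_of_injective f hf
      _ = (L.permutations.toFinset).card := Nat.card_eq_finsetCard _
      _ ≤ L.permutations.length := List.toFinset_card_le _
      _ = Nat.factorial L.length := List.length_permutations L
      _ = Nat.factorial k := by
          rw [show L.length = k from by
            rw [← hcard, ← hML]; exact (Multiset.coe_card L).symm]
  calc Nat.card {q : Fin k → ℕ // ((List.ofFn q : List ℕ) : Multiset ℕ) = M}
      ≤ Nat.factorial k := h1
    _ ≤ Nat.factorial k * 4 ^ (m.primeFactorsList.length - k) :=
        Nat.le_mul_of_pos_right _ (pow_pos (by norm_num) _)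
end

section
/- Let $x \geq 2$ and let $a$ be a function supported on positive integers that are products of exactly $k$ elements from a finite set $\mathcal{Q}$ of primes and prime squares, given by $a(m) = \sum_{q_1, \ldots, q_k \in \mathcal{Q} : \prod q_i = m} \prod_i a(q_i)$ for complex weights $(a(q))_{q \in \mathcal{Q}}$. Then $\sum_m \frac{\tilde{d}(m)|a(m)|^2}{m} \leq (k!) \big(2\sum_{q \in \mathcal{Q}} \frac{v_q |a(q)|^2}{q}\big)^k$, where $\tilde{d}(m) = \sum_{d | m} \mathbf{1}_{p | d \Rightarrow p \in \mathcal{P}}$ for the set $\mathcal{P}$ of primes underlying $\mathcal{Q}$, and $v_q = 1$ if $q$ is prime, $v_q = 6$ if $q$ is a prime square. -/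
/-!
Cauchy–Schwarz on each fibre gives `|a(m)|² ≤ N(m) ∑_{∏ qᵢ = m} ∏ |a(qᵢ)|²`, where `N(m)` is the
number of ordered factorizations of `m` into `k` elements of `Q`. Regrouping the sum by tuples, it
suffices that `d̃(m) N(m) ≤ k! ∏ᵢ 2 v_{qᵢ}` whenever `∏ qᵢ = m`; the sum over tuples then
factorises into a `k`-th power. Since `d̃(m) ≤ τ(m) ≤ 2^Ω(m)` and `6^Ω(q) = 3 · 2 v_q` for `q ∈ Q`,
this reduces to `N(m) 3^k ≤ k! 3^Ω(m)`. That bound is proved by splitting off one prime power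
`p^e ∥ m` at a time: the factors divisible by `p` are `p` or `p²`, and if there are `j` of them,
`e - j` of them are `p²`. The induction then closes because `∑_j C(j, e - j) 3^j / j! ≤ 3^e`.
-/

open Finset Nat ArithmeticFunction
open scoped ArithmeticFunction.Omega

theorem tsum_mul_norm_sum_fiber_sq_le {α β E : Type*} [DecidableEq β] [SeminormedAddCommGroup E]
    (s : Finset α) (π : α → β) (f : α → E) (w : β → ℝ) (hw : ∀ b, 0 ≤ w b) :
    ∑' b, w b * ‖∑ a ∈ s, if π a = b then f a else 0‖ ^ 2 ≤
      ∑ a ∈ s, w (π a) * #{a' ∈ s | π a' = π a} * ‖f a‖ ^ 2 := by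
  rw [tsum_eq_sum (s := s.image π) fun b hb => by
    rw [sum_eq_zero fun a ha => if_neg fun h : π a = b => hb (h ▸ mem_image_of_mem π ha)]
    simp]
  calc ∑ b ∈ s.image π, w b * ‖∑ a ∈ s, if π a = b then f a else 0‖ ^ 2
      ≤ ∑ b ∈ s.image π, ∑ a ∈ s with π a = b, w b * #{a' ∈ s | π a' = b} * ‖f a‖ ^ 2 := by
        refine sum_le_sum fun b _ => ?_
        rw [← sum_filter, ← mul_sum, mul_assoc]
        gcongr
        · exact hw b
        calc ‖∑ a ∈ s with π a = b, f a‖ ^ 2 ≤ (∑ a ∈ s with π a = b, ‖f a‖) ^ 2 := by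
              gcongr; exact norm_sum_le _ _
          _ ≤ _ := sq_sum_le_card_mul_sum_sq
    _ = ∑ a ∈ s, w (π a) * #{a' ∈ s | π a' = π a} * ‖f a‖ ^ 2 := by
        rw [← sum_fiberwise_of_maps_to fun a ha => mem_image_of_mem π ha]
        refine sum_congr rfl fun b _ => sum_congr rfl fun a ha => ?_
        rw [(mem_filter.1 ha).2]

theorem Nat.choose_le_factorial (n k : ℕ) : n.choose k ≤ n ! := by
  rcases le_or_gt k n with h | h
  · rw [← choose_mul_factorial_mul_factorial h, mul_assoc]
    exact Nat.le_mul_of_pos_right _ (by positivity)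
  · simp [choose_eq_zero_of_lt h]

/-- Dividing by `s!`, this says `∑_{j ≤ min s e} C(j, e - j) 3^j / j! ≤ 3^e`. -/
theorem sum_choose_mul_choose_mul_factorial_le (s e : ℕ) :
    ∑ j ∈ range (s + 1), s.choose j * ((if j ≤ e then j.choose (e - j) else 0) * 3 ^ j * (s - j)!)
      ≤ s ! * 3 ^ e := by
  have hfac : ∀ j, s.choose j * j ! * (s - j)! ≤ s ! := fun j => by
    rcases le_or_gt j s with hj | hj
    · exact (choose_mul_factorial_mul_factorial hj).le
    · simp [choose_eq_zero_of_lt hj]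
  match e with
  | 0 =>
    rw [sum_eq_single 0 (fun j _ hj => by simp [hj]) (by simp)]
    simp
  | 1 =>
    rw [sum_eq_single 1 (fun j _ hj => by rcases j with _ | _ | j <;> simp_all) (fun h => by
      simp [choose_eq_zero_of_lt (by simpa using h : s < 1)])]
    simpa [mul_comm, mul_assoc, mul_left_comm] using Nat.mul_le_mul_right 3 (hfac 1)
  | e + 2 =>
    set t := fun j =>
      s.choose j * ((if j ≤ e + 2 then j.choose (e + 2 - j) else 0) * 3 ^ j * (s - j)!)
    have hlow : ∀ j ∈ range (e + 2), t j ≤ s ! * 3 ^ j := fun j hj => by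
      have hj : j ≤ e + 2 := by simp at hj; omega
      calc t j ≤ s.choose j * (j ! * 3 ^ j * (s - j)!) := by
            simp only [t, if_pos hj]; gcongr; exact choose_le_factorial _ _
        _ = s.choose j * j ! * (s - j)! * 3 ^ j := by ring
        _ ≤ s ! * 3 ^ j := by gcongr; exact hfac j
    have htop : 2 * t (e + 2) ≤ s ! * 3 ^ (e + 2) :=
      calc 2 * t (e + 2) ≤ (e + 2)! * t (e + 2) := by
            gcongr; exact (factorial_le (by omega : 2 ≤ e + 2) : 2 ! ≤ _)
        _ = s.choose (e + 2) * (e + 2)! * (s - (e + 2))! * 3 ^ (e + 2) := by simp [t]; ring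
        _ ≤ s ! * 3 ^ (e + 2) := by gcongr; exact hfac _
    have hgeom := geom_sum_mul_add 2 (e + 2)
    calc ∑ j ∈ range (s + 1), t j ≤ ∑ j ∈ range (e + 2 + 1), t j :=
          sum_le_sum_of_ne_zero fun j _ hj => by
            simp only [t] at hj; simp only [mem_range]; by_contra h; simp_all
      _ = ∑ j ∈ range (e + 2), t j + t (e + 2) := sum_range_succ _ _
      _ ≤ ∑ j ∈ range (e + 2), s ! * 3 ^ j + t (e + 2) := by gcongr with j hj; exact hlow j hj
      _ ≤ s ! * 3 ^ (e + 2) := by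
        rw [← mul_sum]; norm_num at hgeom; nlinarith

theorem Nat.Prime.eq_and_eq_of_pow_mul_eq_pow_mul {p c e x a : ℕ} (hp : p.Prime) (hx : ¬ p ∣ x)
    (ha : ¬ p ∣ a) (h : p ^ c * x = p ^ e * a) : c = e ∧ x = a := by
  have hx0 : x ≠ 0 := fun h0 => hx (h0 ▸ dvd_zero p)
  have ha0 : a ≠ 0 := fun h0 => ha (h0 ▸ dvd_zero p)
  have hce : c = e := by
    simpa [Nat.factorization_mul, hp.ne_zero, hx0, ha0, hp.factorization_self,
      Nat.factorization_eq_zero_of_not_dvd hx, Nat.factorization_eq_zero_of_not_dvd ha]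
      using congrArg (·.factorization p) h
  subst hce
  exact ⟨rfl, Nat.eq_of_mul_eq_mul_left (pow_pos hp.pos c) h⟩

theorem Nat.Prime.eq_or_eq_sq_of_dvd {p p' q : ℕ} (hp : p.Prime) (hp' : p'.Prime)
    (hq : q = p' ∨ q = p' ^ 2) (hpq : p ∣ q) : q = p ∨ q = p ^ 2 := by
  obtain rfl | rfl := hq
  · exact .inl ((prime_dvd_prime_iff_eq hp hp').1 hpq).symm
  · exact .inr (by rw [(prime_dvd_prime_iff_eq hp hp').1 (hp.dvd_of_dvd_pow hpq)])

theorem Nat.card_divisors_le_two_pow_cardFactors {m : ℕ} (hm : m ≠ 0) :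
    #m.divisors ≤ 2 ^ Ω m := by
  rw [Nat.card_divisors hm, cardFactors_eq_sum_factorization, Finsupp.sum, ← prod_pow_eq_pow_sum,
    Nat.support_factorization]
  exact prod_le_prod' fun p _ => Nat.lt_two_pow_self

theorem ArithmeticFunction.cardFactors_prod {ι : Type*} (s : Finset ι) {f : ι → ℕ}
    (hf : ∀ i ∈ s, f i ≠ 0) : Ω (∏ i ∈ s, f i) = ∑ i ∈ s, Ω (f i) := by
  have h0 : (s.val.map f).prod ≠ 0 := by rw [← prod_eq_multiset_prod]; exact prod_ne_zero_iff.2 hf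
  rw [prod_eq_multiset_prod, cardFactors_multiset_prod h0, Multiset.map_map, sum_eq_multiset_sum]
  rfl

theorem six_pow_cardFactors_le {q p : ℕ} (hp : p.Prime) (hq : q = p ∨ q = p ^ 2) :
    6 ^ Ω q ≤ 6 * (if q.Prime then 1 else 6) := by
  obtain rfl | rfl := hq
  · simp [hp]
  · simp [hp, Nat.Prime.not_prime_pow le_rfl]

section OrderedFactorizations

variable {ι : Type*} [Fintype ι] [DecidableEq ι]

/-- Entries off `S` are forced to be `1`, so the induction can shrink `S` without changing the
index type. -/
def orderedFactorizations (Q : Finset ℕ) (S : Finset ι) (m : ℕ) : Finset (ι → ℕ) :=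
  {r ∈ Fintype.piFinset fun i => if i ∈ S then Q else {1} | ∏ i, r i = m}

theorem prod_eq_pow_of_mem_piFinset {p : ℕ} {T : Finset ι} {g : ι → ℕ}
    (hg : g ∈ Fintype.piFinset fun i => if i ∈ T then {p, p ^ 2} else {1}) :
    ∏ i, g i = p ^ (#T + #{i ∈ T | g i = p ^ 2}) := by
  rw [Fintype.mem_piFinset] at hg
  have hT : ∀ i ∈ T, g i = p ^ (if g i = p ^ 2 then 2 else 1) := fun i hi => by
    have := hg i; rw [if_pos hi] at this
    split_ifs with h
    · exact h
    · simpa [h] using this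
  rw [← prod_subset (subset_univ T) fun i _ hi => by simpa [hi] using hg i, prod_congr rfl hT,
    prod_pow_eq_pow_sum, card_filter, card_eq_sum_ones, ← sum_add_distrib]
  congr 1
  exact sum_congr rfl fun i _ => by split_ifs <;> rfl

theorem orderedFactorizations_pow_subset_image {p e : ℕ} (hp : 2 ≤ p) (T : Finset ι) :
    orderedFactorizations {p, p ^ 2} T (p ^ e) ⊆
      (T.powersetCard (e - #T)).image
        fun U i => if i ∈ U then p ^ 2 else if i ∈ T then p else 1 := by
  intro g hg
  obtain ⟨hgT, hprod⟩ := mem_filter.1 hg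
  have he : #T + #{i ∈ T | g i = p ^ 2} = e :=
    Nat.pow_right_injective hp ((prod_eq_pow_of_mem_piFinset hgT).symm.trans hprod)
  refine mem_image.2 ⟨{i ∈ T | g i = p ^ 2},
    mem_powersetCard.2 ⟨filter_subset _ _, by omega⟩, funext fun i => ?_⟩
  have := Fintype.mem_piFinset.1 hgT i
  by_cases hi : i ∈ T <;> simp_all; grind

theorem card_orderedFactorizations_pow_le {p : ℕ} (hp : 2 ≤ p) (T : Finset ι) (e : ℕ) :
    #(orderedFactorizations {p, p ^ 2} T (p ^ e)) ≤ if #T ≤ e then (#T).choose (e - #T) else 0 := by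
  split_ifs with h
  · calc _ ≤ _ := card_le_card (orderedFactorizations_pow_subset_image hp T)
      _ ≤ _ := card_image_le
      _ = _ := card_powersetCard _ _
  · refine (card_eq_zero.2 <| eq_empty_of_forall_notMem fun g hg => h ?_).le
    obtain ⟨hgT, hprod⟩ := mem_filter.1 hg
    have := Nat.pow_right_injective hp ((prod_eq_pow_of_mem_piFinset hgT).symm.trans hprod)
    omega

theorem orderedFactorizations_prime_pow_mul_subset {Q : Finset ℕ} {p a : ℕ} (hp : p.Prime)
    (hpa : ¬ p ∣ a) (hQ : ∀ q ∈ Q, p ∣ q → q = p ∨ q = p ^ 2) (S : Finset ι) (e : ℕ) :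
    orderedFactorizations Q S (p ^ e * a) ⊆
      (S.powerset.sigma fun T => orderedFactorizations {p, p ^ 2} T (p ^ e) ×ˢ
        orderedFactorizations Q (S \ T) a).image fun x => x.2.1 * x.2.2 := by
  intro r hr
  obtain ⟨hrS, hprod⟩ := mem_filter.1 hr
  set T := {i ∈ S | p ∣ r i}
  set g : ι → ℕ := fun i => if p ∣ r i then r i else 1
  set h : ι → ℕ := fun i => if p ∣ r i then 1 else r i
  have hgT : g ∈ Fintype.piFinset fun i => if i ∈ T then {p, p ^ 2} else {1} :=
    Fintype.mem_piFinset.2 fun i => by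
      have := Fintype.mem_piFinset.1 hrS i
      have := hQ (r i)
      by_cases hi : i ∈ S <;> by_cases hd : p ∣ r i <;> simp_all [T, g]
  have hhS : h ∈ Fintype.piFinset fun i => if i ∈ S \ T then Q else {1} :=
    Fintype.mem_piFinset.2 fun i => by
      have := Fintype.mem_piFinset.1 hrS i
      by_cases hi : i ∈ S <;> by_cases hd : p ∣ r i <;> simp_all [T, h]
  have hh : ¬ p ∣ ∏ i, h i := by
    rw [hp.prime.dvd_finsetProd_iff]
    rintro ⟨i, -, hi⟩
    by_cases hd : p ∣ r i <;> simp_all [h, hp.ne_one]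
  have hrgh : g * h = r := funext fun i => by by_cases hd : p ∣ r i <;> simp [g, h, hd]
  have hgh : #T + #{i ∈ T | g i = p ^ 2} = e ∧ ∏ i, h i = a :=
    hp.eq_and_eq_of_pow_mul_eq_pow_mul hh hpa <| by
      rw [← prod_eq_pow_of_mem_piFinset hgT, ← prod_mul_distrib, ← hprod]
      exact prod_congr rfl fun i _ => congrFun hrgh i
  refine mem_image.2 ⟨⟨T, g, h⟩, mem_sigma.2 ⟨mem_powerset.2 (filter_subset _ _), ?_⟩, hrgh⟩
  exact mem_product.2 ⟨mem_filter.2 ⟨hgT, by rw [prod_eq_pow_of_mem_piFinset hgT, hgh.1]⟩,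
    mem_filter.2 ⟨hhS, hgh.2⟩⟩

theorem card_orderedFactorizations_prime_pow_mul_le {Q : Finset ℕ} {p a : ℕ} (hp : p.Prime)
    (hpa : ¬ p ∣ a) (hQ : ∀ q ∈ Q, p ∣ q → q = p ∨ q = p ^ 2) (S : Finset ι) (e : ℕ) :
    #(orderedFactorizations Q S (p ^ e * a)) ≤ ∑ T ∈ S.powerset,
      #(orderedFactorizations {p, p ^ 2} T (p ^ e)) * #(orderedFactorizations Q (S \ T) a) := by
  refine (card_le_card (orderedFactorizations_prime_pow_mul_subset hp hpa hQ S e)).trans ?_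
  exact card_image_le.trans_eq <| by simp only [card_sigma, card_product]

theorem card_orderedFactorizations_one_le {Q : Finset ℕ} (hQ : 1 ∉ Q) (S : Finset ι) :
    #(orderedFactorizations Q S 1) ≤ if S = ∅ then 1 else 0 := by
  split_ifs with hS
  · subst hS
    exact (card_filter_le _ _).trans_eq (by simp)
  · obtain ⟨i, hi⟩ := nonempty_iff_ne_empty.2 hS
    refine (card_eq_zero.2 <| eq_empty_of_forall_notMem fun r hr => hQ ?_).le
    obtain ⟨hrS, hprod⟩ := mem_filter.1 hr
    have hri := Fintype.mem_piFinset.1 hrS i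
    rw [if_pos hi] at hri
    rwa [← Nat.dvd_one.1 (hprod ▸ dvd_prod_of_mem r (mem_univ i))]

theorem card_orderedFactorizations_mul_three_pow_le {Q : Finset ℕ}
    (hQ : ∀ q ∈ Q, ∃ p, p.Prime ∧ (q = p ∨ q = p ^ 2)) {m : ℕ} (hm : m ≠ 0) (S : Finset ι) :
    #(orderedFactorizations Q S m) * 3 ^ #S ≤ (#S)! * 3 ^ Ω m := by
  induction m using Nat.recOnPrimePow generalizing S with
  | zero => exact absurd rfl hm
  | one =>
    have h1 : 1 ∉ Q := fun h => by
      obtain ⟨p, hp, h⟩ := hQ 1 h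
      exact hp.ne_one (by simpa [eq_comm, sq] using h)
    have := card_orderedFactorizations_one_le h1 S
    split_ifs at this with hS <;> simp_all
  | prime_pow_mul a p e hp hpa _ ih =>
    have ha : a ≠ 0 := by rintro rfl; simp at hm
    have hQp : ∀ q ∈ Q, p ∣ q → q = p ∨ q = p ^ 2 := fun q hq hpq => by
      obtain ⟨p', hp', hq'⟩ := hQ q hq
      exact hp.eq_or_eq_sq_of_dvd hp' hq' hpq
    calc #(orderedFactorizations Q S (p ^ e * a)) * 3 ^ #S
        ≤ (∑ T ∈ S.powerset, #(orderedFactorizations {p, p ^ 2} T (p ^ e)) *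
            #(orderedFactorizations Q (S \ T) a)) * 3 ^ #S := by
          gcongr; exact card_orderedFactorizations_prime_pow_mul_le hp hpa hQp S e
      _ = ∑ T ∈ S.powerset, #(orderedFactorizations {p, p ^ 2} T (p ^ e)) * 3 ^ #T *
            (#(orderedFactorizations Q (S \ T) a) * 3 ^ #(S \ T)) := by
          rw [sum_mul]
          refine sum_congr rfl fun T hT => ?_
          rw [← card_sdiff_add_card_eq_card (mem_powerset.1 hT)]
          ring
      _ ≤ ∑ T ∈ S.powerset, (if #T ≤ e then (#T).choose (e - #T) else 0) * 3 ^ #T *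
            ((#S - #T)! * 3 ^ Ω a) := by
          refine sum_le_sum fun T hT => Nat.mul_le_mul ?_ ?_
          · exact Nat.mul_le_mul_right _ (card_orderedFactorizations_pow_le hp.two_le T e)
          · rw [← card_sdiff_of_subset (mem_powerset.1 hT)]
            exact ih ha _
      _ = (∑ j ∈ range (#S + 1), (#S).choose j *
            ((if j ≤ e then j.choose (e - j) else 0) * 3 ^ j * (#S - j)!)) * 3 ^ Ω a := by
          rw [sum_powerset_apply_card (fun j => (if j ≤ e then j.choose (e - j) else 0) * 3 ^ j *
            ((#S - j)! * 3 ^ Ω a)), sum_mul]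
          simp only [smul_eq_mul, mul_assoc]
      _ ≤ (#S)! * 3 ^ e * 3 ^ Ω a := by gcongr; exact sum_choose_mul_choose_mul_factorial_le _ _
      _ = (#S)! * 3 ^ Ω (p ^ e * a) := by
          rw [cardFactors_mul (pow_ne_zero e hp.ne_zero) ha, cardFactors_apply_prime_pow hp,
            pow_add, mul_assoc]

theorem card_divisors_mul_card_fiber_le {Q : Finset ℕ}
    (hQ : ∀ q ∈ Q, ∃ p, p.Prime ∧ (q = p ∨ q = p ^ 2)) {r : ι → ℕ} (hr : ∀ i, r i ∈ Q) :
    #(∏ i, r i).divisors * #{s ∈ Fintype.piFinset fun _ : ι => Q | ∏ i, s i = ∏ i, r i} ≤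
      (Fintype.card ι)! * ∏ i, 2 * (if (r i).Prime then 1 else 6) := by
  have hr0 : ∀ i ∈ univ, r i ≠ 0 := fun i _ => by
    obtain ⟨p, hp, h | h⟩ := hQ _ (hr i) <;> simp [h, hp.ne_zero]
  have hm : ∏ i, r i ≠ 0 := prod_ne_zero_iff.2 hr0
  have hN := card_orderedFactorizations_mul_three_pow_le hQ hm (univ : Finset ι)
  simp only [orderedFactorizations, mem_univ, if_true, Finset.card_univ] at hN
  refine Nat.le_of_mul_le_mul_right ?_ (by positivity : 0 < 3 ^ Fintype.card ι)
  calc _ ≤ 2 ^ Ω (∏ i, r i) * ((Fintype.card ι)! * 3 ^ Ω (∏ i, r i)) := by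
        rw [mul_assoc]; exact Nat.mul_le_mul (Nat.card_divisors_le_two_pow_cardFactors hm) hN
    _ = (Fintype.card ι)! * ∏ i, 6 ^ Ω (r i) := by
        rw [cardFactors_prod _ hr0, prod_pow_eq_pow_sum, mul_left_comm, ← mul_pow]; rfl
    _ ≤ (Fintype.card ι)! * ∏ i, 6 * (if (r i).Prime then 1 else 6) := by
        gcongr with i
        obtain ⟨p, hp, h⟩ := hQ _ (hr i)
        exact six_pow_cardFactors_le hp h
    _ = _ := by
        rw [mul_assoc, ← Finset.card_univ, ← prod_const, ← prod_mul_distrib]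
        exact congrArg _ (prod_congr rfl fun i _ => by ring)

theorem card_filter_divisors_div_mul_card_fiber_mul_norm_sq_le {Q : Finset ℕ}
    (hQ : ∀ q ∈ Q, ∃ p, p.Prime ∧ (q = p ∨ q = p ^ 2)) (P : ℕ → Prop) [DecidablePred P]
    {r : ι → ℕ} (hr : ∀ i, r i ∈ Q) (A : ℕ → ℂ) :
    ((#{d ∈ (∏ i, r i).divisors | P d} : ℕ) : ℝ) / (∏ i, r i : ℕ) *
        (#{s ∈ Fintype.piFinset fun _ : ι => Q | ∏ i, s i = ∏ i, r i} : ℕ) *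
        ‖∏ i, A (r i)‖ ^ 2 ≤
      (Fintype.card ι)! * ∏ i, 2 * (if (r i).Prime then (1 : ℝ) else 6) * ‖A (r i)‖ ^ 2 / r i := by
  set D := ((#{d ∈ (∏ i, r i).divisors | P d} : ℕ) : ℝ)
  set N := ((#{s ∈ Fintype.piFinset fun _ : ι => Q | ∏ i, s i = ∏ i, r i} : ℕ) : ℝ)
  have hDN : D * N ≤ (Fintype.card ι)! * ∏ i, 2 * (if (r i).Prime then (1 : ℝ) else 6) := by
    simp only [D, N]
    exact_mod_cast (Nat.mul_le_mul_right _ (card_filter_le _ _)).trans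
      (card_divisors_mul_card_fiber_le hQ hr)
  calc D / (∏ i, r i : ℕ) * N * ‖∏ i, A (r i)‖ ^ 2 = D * N * ∏ i, ‖A (r i)‖ ^ 2 / r i := by
        rw [norm_prod, ← prod_pow, prod_div_distrib, Nat.cast_prod]; ring
    _ ≤ ((Fintype.card ι)! * ∏ i, 2 * (if (r i).Prime then (1 : ℝ) else 6)) *
          ∏ i, ‖A (r i)‖ ^ 2 / r i := by gcongr
    _ = _ := by rw [mul_assoc, ← prod_mul_distrib]; simp_rw [mul_div_assoc]

end OrderedFactorizations

open Classical in
theorem high_moment_combinatorial_bound_general (k : ℕ)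
    (PS QS : Finset ℕ) (hPS : ∀ p ∈ PS, p.Prime)
    (hQS : ∀ q ∈ QS, (q ∈ PS) ∨ (∃ p ∈ PS, q = p ^ 2))
    (A : ℕ → ℂ) :
    (∑' m : ℕ,
        ((((m.divisors).filter (fun d => ∀ p : ℕ, p.Prime → p ∣ d → p ∈ PS)).card : ℝ) *
          ‖∑ q ∈ Fintype.piFinset (fun _ : Fin k => QS),
              if (∏ i, q i) = m then ∏ i, A (q i) else 0‖ ^ 2 / m)) ≤
      (Nat.factorial k : ℝ) *
        (2 * ∑ q ∈ QS, (if q.Prime then (1 : ℝ) else 6) * ‖A q‖ ^ 2 / q) ^ k := by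
  have hQ : ∀ q ∈ QS, ∃ p, p.Prime ∧ (q = p ∨ q = p ^ 2) := fun q hq => by
    obtain h | ⟨p, hp, rfl⟩ := hQS q hq
    exacts [⟨q, hPS q h, .inl rfl⟩, ⟨p, hPS p hp, .inr rfl⟩]
  refine (tsum_congr fun m => mul_div_right_comm _ _ _).trans_le <|
    (tsum_mul_norm_sum_fiber_sq_le _ _ _ _ fun m => by positivity).trans ?_
  calc _ ≤ ∑ r ∈ Fintype.piFinset fun _ : Fin k => QS,
        (k ! : ℝ) * ∏ i, 2 * (if (r i).Prime then (1 : ℝ) else 6) * ‖A (r i)‖ ^ 2 / r i :=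
        sum_le_sum fun r hr => by
          simpa only [Fintype.card_fin] using card_filter_divisors_div_mul_card_fiber_mul_norm_sq_le
            hQ _ (Fintype.mem_piFinset.1 hr) A
    _ = _ := by
        rw [← mul_sum, ← prod_univ_sum (fun _ => QS)
          (fun _ q => 2 * (if q.Prime then (1 : ℝ) else 6) * ‖A q‖ ^ 2 / q), prod_const,
          Finset.card_fin, mul_sum]
        simp_rw [mul_assoc, mul_div_assoc]

open Classical in
/-- Combinatorial core of the high-moment bound (Lemma 2): with
`a(m) = ∑_{q₁,…,q_k ∈ QS, ∏ qᵢ = m} ∏ᵢ a(qᵢ)` for a finite set `QS` of primes and prime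
squares over a prime set `PS`, one has
`∑_m d̃(m)|a(m)|²/m ≤ k! (2 ∑_{q ∈ QS} v_q |a(q)|²/q)^k`, where `d̃(m)` counts divisors of
`m` supported on `PS`, and `v_q = 1` for primes, `6` for prime squares. -/
theorem high_moment_combinatorial_bound (x : ℝ) (hx : 2 ≤ x) (k : ℕ) (hk : 1 ≤ k)
    (PS QS : Finset ℕ) (hPS : ∀ p ∈ PS, p.Prime)
    (hQS : ∀ q ∈ QS, (q ∈ PS) ∨ (∃ p ∈ PS, q = p ^ 2))
    (A : ℕ → ℂ) :
    (∑' m : ℕ,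
        ((((m.divisors).filter (fun d => ∀ p : ℕ, p.Prime → p ∣ d → p ∈ PS)).card : ℝ) *
          ‖∑ q ∈ Fintype.piFinset (fun _ : Fin k => QS),
              if (∏ i, q i) = m then ∏ i, A (q i) else 0‖ ^ 2 / m)) ≤
      (Nat.factorial k : ℝ) *
        (2 * ∑ q ∈ QS, (if q.Prime then (1 : ℝ) else 6) * ‖A q‖ ^ 2 / q) ^ k :=
  high_moment_combinatorial_bound_general k PS QS hPS hQS A
end
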